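/- If L is a finite lattice with least element 0 and A is a nonempty antichain in L \ {0}, then A is a lattice-antichain (i.e. for all a, b in the up-set of A, the meet of a and b lies in {0} ∪ up-set of A) if and only if the poset L_A obtained by adding a new element n with n covering 0 and with covering set exactly A is again a lattice. -/

import Mathlib

/-!
Encode `L_A` on `Option L`, with `none` as the new atom `n`. Since `n ≤ x` exactly for
`x ∈ ↑A`, the only pairs whose meet in `L_A` is in question are `a, b ∈ ↑A` with
`a ⊓ b ∉ ↑A`: then `n` is a common lower bound not below `a ⊓ b`, so the meet exists iff
it is `n`, i.e. iff every lower bound of `a ⊓ b` is `0`, i.e. iff `a ⊓ b = 0`. Hence `L_A`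
has all meets exactly for lattice-antichains, and a finite meet-semilattice with a top is a
lattice.
-/

namespace PaperLattice

variable {N : ℕ}

/-- Depth: one less than the maximum length of a chain from `t` down to `a` w.r.t. `le`. -/
noncomputable def dep (le : Fin N → Fin N → Prop) (t a : Fin N) : ℕ :=
  sSup {k | ∃ l : List (Fin N), List.Chain' (fun x y => le y x ∧ y ≠ x) l ∧
    l.head? = some t ∧ l.getLast? = some a ∧ l.length = k + 1}

/-- The `d`-th level: elements of depth `d`. -/
noncomputable def lev (le : Fin N → Fin N → Prop) (t : Fin N) (d : ℕ) : Set (Fin N) :=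
  {a | dep le t a = d}

/-- A labelled poset is levellised if depth is monotone in the nonzero labels. -/
def Levellised (le : Fin N → Fin N → Prop) (t : Fin N) : Prop :=
  ∀ i j : Fin N, 0 < (i : ℕ) → (i : ℕ) ≤ (j : ℕ) → dep le t i ≤ dep le t j

def lt' (le : Fin N → Fin N → Prop) (a b : Fin N) : Prop := le a b ∧ a ≠ b

/-- `b` covers `a`. -/
def CovByRel (le : Fin N → Fin N → Prop) (a b : Fin N) : Prop :=
  lt' le a b ∧ ∀ x, lt' le a x → lt' le x b → False

/-- The covering set of `a`. -/
def cov (le : Fin N → Fin N → Prop) (a : Fin N) : Set (Fin N) := {b | CovByRel le a b}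

/-- The up-set of `A`. -/
def upset (le : Fin N → Fin N → Prop) (A : Set (Fin N)) : Set (Fin N) :=
  {x | ∃ a ∈ A, le a x}

def AntichainRel (le : Fin N → Fin N → Prop) (A : Set (Fin N)) : Prop :=
  ∀ a ∈ A, ∀ b ∈ A, a ≠ b → ¬ le a b

/-- Binary weight of a set of labels. -/
noncomputable def wt (A : Set (Fin N)) : ℕ :=
  ∑ j : Fin N, A.indicator (fun j => 2 ^ (j : ℕ)) j

/-- `z` is a bottom and `o` a top for `le`. -/
def Bounds (le : Fin N → Fin N → Prop) (z o : Fin N) : Prop :=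
  (∀ a, le z a) ∧ (∀ a, le a o)

/-- The order obtained from `le` by adding `m` new atoms, the `i`-th having covering set `A i`. -/
def extLe {n m : ℕ} (le : Fin n → Fin n → Prop) (A : Fin m → Set (Fin n)) :
    Fin (n + m) → Fin (n + m) → Prop := fun x y =>
  if hx : (x : ℕ) < n then
    if hy : (y : ℕ) < n then le ⟨x, hx⟩ ⟨y, hy⟩
    else (x : ℕ) = 0
  else
    if hy : (y : ℕ) < n then
      (⟨y, hy⟩ : Fin n) ∈ upset le (A ⟨(x : ℕ) - n, by have := x.isLt; omega⟩)
    else x = y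

/-- The relabelled order `π(L)`. -/
def permLe {n : ℕ} (π : Equiv.Perm (Fin n)) (le : Fin n → Fin n → Prop) :
    Fin n → Fin n → Prop := fun a b => le (π.symm a) (π.symm b)

/-- The join is the meet of the finitely many common upper bounds. -/
noncomputable abbrev SemilatticeInf.toLatticeOfFinite (β : Type*) [SemilatticeInf β] [OrderTop β]
    [Finite β] : Lattice β where
  __ := ‹SemilatticeInf β›
  sup a b := (Set.toFinite {c | a ≤ c ∧ b ≤ c}).toFinset.inf id
  le_sup_left _ _ := Finset.le_inf fun _ hc => ((Set.Finite.mem_toFinset _).1 hc).1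
  le_sup_right _ _ := Finset.le_inf fun _ hc => ((Set.Finite.mem_toFinset _).1 hc).2
  sup_le _ _ _ hac hbc := Finset.inf_le ((Set.Finite.mem_toFinset _).2 ⟨hac, hbc⟩)

theorem exists_lattice_iff_of_equiv {β γ : Type*} (e : β ≃ γ) (r : γ → γ → Prop) :
    (∃ M : Lattice β, ∀ x y, M.le x y ↔ r (e x) (e y)) ↔
      ∃ M : Lattice γ, ∀ x y, M.le x y ↔ r x y := by
  constructor
  · rintro ⟨M, hM⟩
    exact ⟨@Equiv.lattice _ _ e.symm M, fun x y => (hM _ _).trans (by simp)⟩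
  · rintro ⟨M, hM⟩
    exact ⟨@Equiv.lattice _ _ e M, fun x y => hM (e x) (e y)⟩

section AdjoinAtom

variable {α : Type*}

/-- The order of `L_A`, encoded on `Option α` with `none` as the new atom `n`. -/
def AdjoinAtomLe [Preorder α] [OrderBot α] (A : Set α) : Option α → Option α → Prop
  | some a, some b => a ≤ b
  | some a, none => a = ⊥
  | none, some b => b ∈ upperClosure A
  | none, none => True

section AdjoinAtomOrder

variable [PartialOrder α] [OrderBot α] {A : Set α}

theorem bot_notMem_upperClosure (hA : ⊥ ∉ A) : ⊥ ∉ upperClosure A := by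
  rintro ⟨a, ha, hab⟩
  exact hA (le_bot_iff.1 hab ▸ ha)

abbrev adjoinAtomPartialOrder (hA : ⊥ ∉ A) : PartialOrder (Option α) where
  le := AdjoinAtomLe A
  lt x y := AdjoinAtomLe A x y ∧ ¬AdjoinAtomLe A y x
  lt_iff_le_not_ge _ _ := Iff.rfl
  le_refl x := by cases x <;> simp [AdjoinAtomLe]
  le_trans x y z := by
    rcases x with _ | a <;> rcases y with _ | b <;> rcases z with _ | c <;>
      simp only [AdjoinAtomLe, imp_self, implies_true, true_implies]
    · exact fun hb hbc => (upperClosure A).upper hbc hb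
    · exact fun ha _ => ha ▸ bot_le
    · exact fun hab hb => le_bot_iff.1 (hb ▸ hab)
    · exact fun hab hbc => hab.trans hbc
  le_antisymm x y := by
    rcases x with _ | a <;> rcases y with _ | b <;> simp only [AdjoinAtomLe]
    · simp
    · rintro hb rfl
      exact absurd hb (bot_notMem_upperClosure hA)
    · rintro rfl ha
      exact absurd ha (bot_notMem_upperClosure hA)
    · exact fun hab hba => congrArg some (le_antisymm hab hba)

theorem adjoinAtomLe_some_top [OrderTop α] (hne : A.Nonempty) :
    ∀ x, AdjoinAtomLe A x (some ⊤)
  | none => mem_upperClosure.2 ⟨hne.some, hne.some_mem, le_top⟩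
  | some _ => le_top

end AdjoinAtomOrder

section AdjoinAtomLattice

variable [SemilatticeInf α] [OrderBot α] {A : Set α}

def InfClosedOrBot (U : Set α) : Prop :=
  ∀ a ∈ U, ∀ b ∈ U, a ⊓ b = ⊥ ∨ a ⊓ b ∈ U

open Classical in
noncomputable def adjoinAtomInf (A : Set α) : Option α → Option α → Option α
  | some a, some b =>
    if a ∈ upperClosure A ∧ b ∈ upperClosure A ∧ a ⊓ b ∉ upperClosure A then none
    else some (a ⊓ b)
  | some a, none | none, some a => if a ∈ upperClosure A then none else some ⊥
  | none, none => none

theorem adjoinAtomInf_comm (x y : Option α) : adjoinAtomInf A x y = adjoinAtomInf A y x := by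
  classical
  rcases x with _ | a <;> rcases y with _ | b <;> try rfl
  simp only [adjoinAtomInf, inf_comm b a, and_left_comm]

theorem adjoinAtomInf_le_left (x y : Option α) : AdjoinAtomLe A (adjoinAtomInf A x y) x := by
  rcases x with _ | a <;> rcases y with _ | b <;> simp only [adjoinAtomInf] <;>
    (try split_ifs) <;> simp_all [AdjoinAtomLe]

theorem le_adjoinAtomInf (hmeet : InfClosedOrBot (upperClosure A : Set α)) {x y z : Option α}
    (hzx : AdjoinAtomLe A z x) (hzy : AdjoinAtomLe A z y) :
    AdjoinAtomLe A z (adjoinAtomInf A x y) := by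
  rcases x with _ | a <;> rcases y with _ | b <;> rcases z with _ | c
  case some.some.some =>
    simp only [adjoinAtomInf]
    split_ifs with h
    · exact le_bot_iff.1 ((hmeet a h.1 b h.2.1).resolve_right h.2.2 ▸ le_inf hzx hzy)
    · exact le_inf hzx hzy
  all_goals simp only [adjoinAtomInf]; (try split_ifs) <;> simp_all [AdjoinAtomLe]

theorem infClosedOrBot_of_lattice (M : Lattice (Option α))
    (hM : ∀ x y, M.le x y ↔ AdjoinAtomLe A x y) : InfClosedOrBot (upperClosure A : Set α) := by
  intro a ha b hb
  have hatom : M.le none (M.inf (some a) (some b)) :=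
    M.le_inf _ _ _ ((hM _ _).2 ha) ((hM _ _).2 hb)
  have hmeet : M.le (some (a ⊓ b)) (M.inf (some a) (some b)) :=
    M.le_inf _ _ _ ((hM _ _).2 inf_le_left) ((hM _ _).2 inf_le_right)
  rcases hm : M.inf (some a) (some b) with _ | c
  · rw [hm, hM] at hmeet
    exact Or.inl hmeet
  · rw [hm, hM] at hatom
    have hca : AdjoinAtomLe A (some c) (some a) := (hM _ _).1 (hm ▸ M.inf_le_left _ _)
    have hcb : AdjoinAtomLe A (some c) (some b) := (hM _ _).1 (hm ▸ M.inf_le_right _ _)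
    exact Or.inr ((upperClosure A).upper (le_inf hca hcb) hatom)

noncomputable abbrev adjoinAtomSemilatticeInf (hA : ⊥ ∉ A)
    (hmeet : InfClosedOrBot (upperClosure A : Set α)) : SemilatticeInf (Option α) where
  __ := adjoinAtomPartialOrder hA
  inf := adjoinAtomInf A
  inf_le_left := adjoinAtomInf_le_left
  inf_le_right x y := adjoinAtomInf_comm y x ▸ adjoinAtomInf_le_left y x
  le_inf _ _ _ := le_adjoinAtomInf hmeet

theorem exists_lattice_adjoinAtomLe_iff [OrderTop α] [Finite α] (hne : A.Nonempty)
    (hA : ⊥ ∉ A) :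
    (∃ M : Lattice (Option α), ∀ x y, M.le x y ↔ AdjoinAtomLe A x y) ↔
      InfClosedOrBot (upperClosure A : Set α) := by
  refine ⟨fun ⟨M, hM⟩ => infClosedOrBot_of_lattice M hM, fun hmeet => ?_⟩
  let S := adjoinAtomSemilatticeInf hA hmeet
  exact ⟨@SemilatticeInf.toLatticeOfFinite _ S
    (@OrderTop.mk _ S.toLE ⟨some ⊤⟩ (adjoinAtomLe_some_top hne)) _, fun _ _ => Iff.rfl⟩

end AdjoinAtomLattice

end AdjoinAtom

section FinEncoding

variable {n : ℕ} {L : Lattice (Fin n)} {z o : Fin n}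

/-- `Fin n` carries its own linear order, so the order of `L` has to be passed explicitly. -/
abbrev Bounds.orderBot (hb : Bounds L.le z o) : @OrderBot (Fin n) L.toLE :=
  @OrderBot.mk _ L.toLE ⟨z⟩ hb.1

abbrev Bounds.orderTop (hb : Bounds L.le z o) : @OrderTop (Fin n) L.toLE :=
  @OrderTop.mk _ L.toLE ⟨o⟩ hb.2

theorem extLe_iff_adjoinAtomLe (h : 0 < n) (hb : Bounds L.le ⟨0, h⟩ o) (A : Set (Fin n))
    (x y : Fin (n + 1)) :
    extLe L.le (fun _ : Fin 1 => A) x y ↔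
      @AdjoinAtomLe _ L.toPreorder hb.orderBot A (finSuccEquivLast x) (finSuccEquivLast y) := by
  induction x using Fin.lastCases <;> induction y using Fin.lastCases <;>
    simp [extLe, AdjoinAtomLe, upset, Fin.ext_iff]
  rfl

end FinEncoding

theorem statement0 {n : ℕ} (hn : 2 ≤ n) (L : Lattice (Fin n))
    (hb : Bounds L.le ⟨0, by omega⟩ ⟨1, by omega⟩)
    (A : Set (Fin n)) (hne : A.Nonempty)
    (h0 : ∀ a ∈ A, a ≠ ⟨0, by omega⟩) :
    (∀ a ∈ upset L.le A, ∀ b ∈ upset L.le A,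
        L.inf a b = ⟨0, by omega⟩ ∨ L.inf a b ∈ upset L.le A) ↔
      ∃ M : Lattice (Fin (n + 1)),
        ∀ x y, M.le x y ↔ extLe L.le (fun _ : Fin 1 => A) x y := by
  simp only [extLe_iff_adjoinAtomLe (by omega) hb]
  rw [exists_lattice_iff_of_equiv finSuccEquivLast]
  exact (@exists_lattice_adjoinAtomLe_iff _ L.toSemilatticeInf hb.orderBot A hb.orderTop _ hne
    fun h => h0 _ h rfl).symm

end PaperLattice
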